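/- Let G and X be positive definite continuous linear operators on a real Hilbert space H, with G invertible with continuous inverse G⁻¹. Suppose c < 0.4 is such that for every u ≠ 0, |Real.log ⟪X u, u⟫ − Real.log ⟪G⁻¹ u, u⟫| ≤ c. Then the Newton iterate N := 2 • X − X ∘ G ∘ X is positive definite, and for every u ≠ 0, |Real.log ⟪N u, u⟫ − Real.log ⟪G⁻¹ u, u⟫| ≤ 2 c². -/

import Mathlib

/-!
Write `D = X - G⁻¹` and `m = exp c - 1`. The ring identity `2X - XGX = G⁻¹ - DGD` gives
`⟪N u, u⟫ = ⟪G⁻¹ u, u⟫ - ⟪G (D u), D u⟫`, so `N ≤ G⁻¹`. The hypothesis on `X` says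
`|⟪D w, w⟫| ≤ m ⟪G⁻¹ w, w⟫`; polarizing this and testing it against `q = G (D u)` yields
`⟪G (D u), D u⟫ ≤ m² ⟪G⁻¹ u, u⟫`. Hence `(1 - m²) G⁻¹ ≤ N ≤ G⁻¹` as quadratic forms, and
`1 - (exp c - 1)² ≥ exp (-2c²)` for `0 ≤ c ≤ 0.4`.
-/

open scoped RealInnerProductSpace

open Real

theorem abs_log_sub_log_le_iff {a b s : ℝ} (ha : 0 < a) (hb : 0 < b) :
    |log a - log b| ≤ s ↔ exp (-s) * b ≤ a ∧ a ≤ exp s * b := by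
  rw [← log_div ha.ne' hb.ne', abs_le, le_log_iff_exp_le (div_pos ha hb),
    log_le_iff_le_exp (div_pos ha hb), le_div_iff₀ hb, div_le_iff₀ hb]

theorem abs_sub_le_of_abs_log_sub_log_le {a b c : ℝ} (ha : 0 < a) (hb : 0 < b)
    (h : |log a - log b| ≤ c) : |a - b| ≤ (exp c - 1) * b := by
  obtain ⟨hlow, hupp⟩ := (abs_log_sub_log_le_iff ha hb).mp h
  have hsum : 2 ≤ exp c + exp (-c) := by linarith [add_one_le_exp c, add_one_le_exp (-c)]
  rw [abs_le]
  constructor <;> nlinarith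

theorem exp_neg_two_mul_sq_le {c : ℝ} (hc₀ : 0 ≤ c) (hc : c ≤ 0.4) :
    exp (-(2 * c ^ 2)) ≤ 1 - (exp c - 1) ^ 2 := by
  have hE : exp c - 1 ≤ c * (1 + c / 2 + 2 * c ^ 2 / 9) := by
    have := exp_bound' hc₀ (by linarith) (n := 3) (by norm_num)
    norm_num [Finset.sum_range_succ, Nat.factorial] at this
    linarith
  have hF : 1 + 2 * c ^ 2 + 2 * c ^ 4 ≤ exp (2 * c ^ 2) := by
    have := quadratic_le_exp_of_nonneg (by positivity : 0 ≤ 2 * c ^ 2)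
    linarith
  have hE₀ : 0 ≤ exp c - 1 := by linarith [add_one_le_exp c]
  have hc2 : c ^ 2 ≤ 0.16 := by nlinarith
  have hq : (1 + c / 2 + 2 * c ^ 2 / 9) ^ 2 ≤ 1.53 := by nlinarith
  have hP : 1 + 2 * c ^ 2 + 2 * c ^ 4 ≤ 1 + 2.32 * c ^ 2 := by nlinarith
  have hqP := mul_le_mul hq hP (by positivity) (by norm_num)
  have hpoly : 1 ≤ (1 - (c * (1 + c / 2 + 2 * c ^ 2 / 9)) ^ 2) * (1 + 2 * c ^ 2 + 2 * c ^ 4) := by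
    nlinarith [mul_le_mul_of_nonneg_left hqP (sq_nonneg c)]
  have hsq : (exp c - 1) ^ 2 ≤ (c * (1 + c / 2 + 2 * c ^ 2 / 9)) ^ 2 := by gcongr
  rw [exp_neg, inv_le_iff_one_le_mul₀ (exp_pos _)]
  calc 1 ≤ (1 - (c * (1 + c / 2 + 2 * c ^ 2 / 9)) ^ 2) * (1 + 2 * c ^ 2 + 2 * c ^ 4) := hpoly
    _ ≤ (1 - (exp c - 1) ^ 2) * exp (2 * c ^ 2) := by
      gcongr
      nlinarith

theorem two_mul_sub_mul_mul_eq {R : Type*} [Ring R] {G Ginv X : R}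
    (h₁ : G * Ginv = 1) (h₂ : Ginv * G = 1) :
    2 * X - X * G * X = Ginv - (X - Ginv) * G * (X - Ginv) := by
  have h₂' : Ginv * (G * X) = X := by rw [← mul_assoc, h₂, one_mul]
  simp only [sub_mul, mul_sub, mul_assoc, h₁, h₂', mul_one, two_mul]
  abel

theorem IsSelfAdjoint.of_mul_eq_one {R : Type*} [Monoid R] [StarMul R] {G Ginv : R}
    (hG : IsSelfAdjoint G) (h : G * Ginv = 1) : IsSelfAdjoint Ginv := by
  refine left_inv_eq_right_inv ?_ h
  rw [← hG.star_eq, ← star_mul, h, star_one]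

section InnerProduct

variable {E : Type*} [NormedAddCommGroup E] [InnerProductSpace ℝ E]

theorem inner_apply_self_nonneg_of_pos {T : E →L[ℝ] E} (hT : ∀ u, u ≠ 0 → 0 < ⟪T u, u⟫)
    (w : E) : 0 ≤ ⟪T w, w⟫ := by
  rcases eq_or_ne w 0 with rfl | hw
  · simp
  · exact (hT w hw).le

theorem inner_apply_self_pos_of_mul_eq_one {G Ginv : E →L[ℝ] E}
    (hG : ∀ u, u ≠ 0 → 0 < ⟪G u, u⟫) (h : G * Ginv = 1) {u : E} (hu : u ≠ 0) :
    0 < ⟪Ginv u, u⟫ := by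
  have hGinv : ∀ w, G (Ginv w) = w := fun w => by simpa using congr($h w)
  have hv : Ginv u ≠ 0 := fun h0 => hu (by rw [← hGinv u, h0, map_zero])
  simpa [hGinv, real_inner_comm] using hG _ hv

variable {D A : E →L[ℝ] E}

theorem two_mul_inner_le_of_abs_inner_self_le (hD : (D : E →ₗ[ℝ] E).IsSymmetric)
    (h : ∀ w, |⟪D w, w⟫| ≤ ⟪A w, w⟫) (p q : E) :
    2 * ⟪D p, q⟫ ≤ ⟪A p, p⟫ + ⟪A q, q⟫ := by
  have hsum := (abs_le.mp (h (p + q))).2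
  have hdiff := (abs_le.mp (h (p - q))).1
  have hqp : ⟪D q, p⟫ = ⟪D p, q⟫ := by rw [real_inner_comm]; exact (hD p q).symm
  simp only [map_add, map_sub, inner_add_left, inner_add_right, inner_sub_left,
    inner_sub_right] at hsum hdiff
  linarith

theorem two_mul_inner_le_sq_mul_add (hD : (D : E →ₗ[ℝ] E).IsSymmetric)
    (hA : ∀ w, 0 ≤ ⟪A w, w⟫) {m : ℝ} (hm : 0 ≤ m)
    (h : ∀ w, |⟪D w, w⟫| ≤ m * ⟪A w, w⟫) (p q : E) :
    2 * ⟪D p, q⟫ ≤ m ^ 2 * ⟪A p, p⟫ + ⟪A q, q⟫ := by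
  -- For `m > 0`, the case `m = 1` applied to `m • A` at `(m • p, q)` is `m` times the claim.
  have hmA : ∀ w, |⟪D w, w⟫| ≤ ⟪(m • A) w, w⟫ := by
    simpa only [smul_apply, real_inner_smul_left] using h
  rcases hm.eq_or_lt with rfl | hm
  · have := two_mul_inner_le_of_abs_inner_self_le hD hmA p q
    simp only [zero_smul, zero_apply, inner_zero_left] at this
    linarith [hA p, hA q]
  · have := two_mul_inner_le_of_abs_inner_self_le hD hmA (m • p) q
    simp only [map_smul, smul_apply, real_inner_smul_left,
      real_inner_smul_right] at this
    nlinarith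

theorem inner_apply_le_sq_mul_of_mul_eq_one {B : E →L[ℝ] E}
    (hD : (D : E →ₗ[ℝ] E).IsSymmetric) (hA : ∀ w, 0 ≤ ⟪A w, w⟫)
    {m : ℝ} (hm : 0 ≤ m) (h : ∀ w, |⟪D w, w⟫| ≤ m * ⟪A w, w⟫) (hAB : A * B = 1) (p : E) :
    ⟪B (D p), D p⟫ ≤ m ^ 2 * ⟪A p, p⟫ := by
  have := two_mul_inner_le_sq_mul_add hD hA hm h p (B (D p))
  rw [show A (B (D p)) = D p by simpa using congr($hAB (D p))] at this
  rw [real_inner_comm]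
  linarith

theorem inner_two_mul_sub_mul_mul_apply_self_bounds [CompleteSpace E] {G Ginv X : E →L[ℝ] E}
    (hX : IsSelfAdjoint X) (hGinv : IsSelfAdjoint Ginv) (h₁ : G * Ginv = 1) (h₂ : Ginv * G = 1)
    (hG_nonneg : ∀ w, 0 ≤ ⟪G w, w⟫) (hGinv_nonneg : ∀ w, 0 ≤ ⟪Ginv w, w⟫) {m : ℝ} (hm : 0 ≤ m)
    (h : ∀ w, |⟪(X - Ginv) w, w⟫| ≤ m * ⟪Ginv w, w⟫) (u : E) :
    (1 - m ^ 2) * ⟪Ginv u, u⟫ ≤ ⟪(2 * X - X * G * X) u, u⟫ ∧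
      ⟪(2 * X - X * G * X) u, u⟫ ≤ ⟪Ginv u, u⟫ := by
  have hD := ContinuousLinearMap.isSelfAdjoint_iff_isSymmetric.mp (hX.sub hGinv)
  have hNu : ⟪(2 * X - X * G * X) u, u⟫ = ⟪Ginv u, u⟫ - ⟪G ((X - Ginv) u), (X - Ginv) u⟫ := by
    rw [two_mul_sub_mul_mul_eq h₁ h₂, sub_apply, inner_sub_left, mul_apply_eq_comp,
      mul_apply_eq_comp]
    exact congrArg (_ - ·) (hD _ _)
  have hGD := inner_apply_le_sq_mul_of_mul_eq_one hD hGinv_nonneg hm h h₂ u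
  rw [hNu]
  constructor
  · linarith
  · linarith [hG_nonneg ((X - Ginv) u)]

end InnerProduct

/-- Quadratic error reduction of the Newton iterate `N(X) = 2X - XGX` for the
equation `X⁻¹ - G = 0`: pointwise form of
`d_σ(N(X), G⁻¹) ≤ 2 d_σ(X, G⁻¹)²` when `d_σ(X, G⁻¹) < 0.4`. -/
theorem spectral_distance_newton
    {H : Type*} [NormedAddCommGroup H] [InnerProductSpace ℝ H] [CompleteSpace H]
    (G Ginv X : H →L[ℝ] H)
    (hGsa : IsSelfAdjoint G) (hGpos : ∀ u : H, u ≠ 0 → 0 < ⟪G u, u⟫)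
    (hXsa : IsSelfAdjoint X) (hXpos : ∀ u : H, u ≠ 0 → 0 < ⟪X u, u⟫)
    (hG1 : G.comp Ginv = 1) (hG2 : Ginv.comp G = 1)
    (c : ℝ) (hc : c < 0.4)
    (hd : ∀ u : H, u ≠ 0 → |Real.log ⟪X u, u⟫ - Real.log ⟪Ginv u, u⟫| ≤ c)
    (N : H →L[ℝ] H) (hN : N = (2 : ℝ) • X - X.comp (G.comp X)) :
    (IsSelfAdjoint N ∧ ∀ u : H, u ≠ 0 → 0 < ⟪N u, u⟫) ∧
      ∀ u : H, u ≠ 0 → |Real.log ⟪N u, u⟫ - Real.log ⟪Ginv u, u⟫| ≤ 2 * c ^ 2 := by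
  have hGinv_pos := fun u (hu : u ≠ 0) => inner_apply_self_pos_of_mul_eq_one hGpos hG1 hu
  have hform : ∀ w, |⟪(X - Ginv) w, w⟫| ≤ (exp c - 1) * ⟪Ginv w, w⟫ := fun w => by
    rcases eq_or_ne w 0 with rfl | hw
    · simp
    · simpa only [sub_apply, inner_sub_left] using
        abs_sub_le_of_abs_log_sub_log_le (hXpos w hw) (hGinv_pos w hw) (hd w hw)
  have hbounds : ∀ u, u ≠ 0 →
      exp (-(2 * c ^ 2)) * ⟪Ginv u, u⟫ ≤ ⟪N u, u⟫ ∧ ⟪N u, u⟫ ≤ ⟪Ginv u, u⟫ := by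
    intro u hu
    have hc₀ : 0 ≤ c := (abs_nonneg _).trans (hd u hu)
    obtain ⟨hlow, hupp⟩ := inner_two_mul_sub_mul_mul_apply_self_bounds hXsa
      (hGsa.of_mul_eq_one hG1) hG1 hG2 (inner_apply_self_nonneg_of_pos hGpos)
      (inner_apply_self_nonneg_of_pos hGinv_pos) (by linarith [add_one_le_exp c]) hform u
    rw [hN, two_smul, ← two_mul]
    exact ⟨(mul_le_mul_of_nonneg_right (exp_neg_two_mul_sq_le hc₀ hc.le)
      (hGinv_pos u hu).le).trans hlow, hupp⟩
  refine ⟨⟨?_, fun u hu => ?_⟩, fun u hu => ?_⟩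
  · have hN_sa := (hXsa.add hXsa).sub (hGsa.conjugate' X)
    rw [hXsa.star_eq] at hN_sa
    rwa [hN, two_smul]
  · exact (mul_pos (exp_pos _) (hGinv_pos u hu)).trans_le (hbounds u hu).1
  · obtain ⟨hlow, hupp⟩ := hbounds u hu
    have hNpos := (mul_pos (exp_pos _) (hGinv_pos u hu)).trans_le hlow
    refine (abs_log_sub_log_le_iff hNpos (hGinv_pos u hu)).mpr ⟨hlow, hupp.trans ?_⟩
    exact le_mul_of_one_le_left (hGinv_pos u hu).le (one_le_exp (by positivity))
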